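/- Let G be a 𝔠-bounded P-group. Then G is balanced if and only if G is functionally balanced. -/

import Mathlib

open Filter Set Topology Pointwise

universe u v

/-- A P-space: countable intersections of open sets are open. -/
def IsPSpace (X : Type*) [TopologicalSpace X] : Prop :=
  ∀ s : ℕ → Set X, (∀ n, IsOpen (s n)) → IsOpen (⋂ n, s n)

/-- A uniform P-space: countable intersections of entourages are entourages. -/
def IsUniformPSpace (X : Type*) [UniformSpace X] : Prop :=
  ∀ s : ℕ → Set (X × X), (∀ n, s n ∈ uniformity X) → (⋂ n, s n) ∈ uniformity X

/-- The left uniformity of a topological group, as a filter on `G × G`. -/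
def leftUnif (G : Type*) [Group G] [TopologicalSpace G] : Filter (G × G) :=
  Filter.comap (fun p : G × G => p.1⁻¹ * p.2) (nhds 1)

/-- The right uniformity of a topological group, as a filter on `G × G`. -/
def rightUnif (G : Type*) [Group G] [TopologicalSpace G] : Filter (G × G) :=
  Filter.comap (fun p : G × G => p.1 * p.2⁻¹) (nhds 1)

/-- The two-sided uniformity (supremum of left and right uniformities). -/
def twoSidedUnif (G : Type*) [Group G] [TopologicalSpace G] : Filter (G × G) :=
  leftUnif G ⊓ rightUnif G

/-- `ε` belongs to the trace of the filter `μ` on the subset `B`. -/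
def MemTrace {G : Type*} (μ : Filter (G × G)) (B : Set G) (ε : Set (G × G)) : Prop :=
  ∃ δ ∈ μ, δ ∩ B ×ˢ B = ε ∩ B ×ˢ B

/-- `f : B → ℝ` is uniformly continuous for the trace on `B` of the filter `μ` on `G × G`. -/
def UCOn {G : Type*} (μ : Filter (G × G)) (B : Set G) (f : B → ℝ) : Prop :=
  ∀ e : ℝ, 0 < e → ∃ δ ∈ μ, ∀ x y : B, ((x : G), (y : G)) ∈ δ → |f x - f y| < e

/-- `ε` is an equivalence relation on the subset `B`. -/
def IsEquivOn {G : Type*} (B : Set G) (ε : Set (G × G)) : Prop :=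
  (∀ x ∈ B, (x, x) ∈ ε) ∧ (∀ x ∈ B, ∀ y ∈ B, (x, y) ∈ ε → (y, x) ∈ ε) ∧
    (∀ x ∈ B, ∀ y ∈ B, ∀ z ∈ B, (x, y) ∈ ε → (y, z) ∈ ε → (x, z) ∈ ε)

/-- The relation `ε` has at most `c` equivalence classes on `B`. -/
def ClassesLE {G : Type*} (B : Set G) (ε : Set (G × G)) (c : Cardinal) : Prop :=
  Cardinal.mk ↥(Set.range fun x : B => {y : B | ((x : G), (y : G)) ∈ ε}) ≤ c

/-- The symmetric subset `B` of a topological group `G` is functionally balanced. -/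
def FunBalancedOn (G : Type*) [Group G] [TopologicalSpace G] (B : Set G) : Prop :=
  ∀ f : B → ℝ, (∃ M : ℝ, ∀ x : B, |f x| ≤ M) →
    UCOn (leftUnif G) B f → UCOn (rightUnif G) B f

/-- The symmetric subset `B` of a topological group `G` is strongly functionally balanced. -/
def StronglyFunBalancedOn (G : Type*) [Group G] [TopologicalSpace G] (B : Set G) : Prop :=
  ∀ f : B → ℝ, UCOn (leftUnif G) B f → UCOn (rightUnif G) B f

/-- A non-archimedean topological group: open subgroups form a base at the identity. -/
def IsNonArchGroup (G : Type*) [Group G] [TopologicalSpace G] : Prop :=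
  ∀ U ∈ nhds (1 : G), ∃ H : Subgroup G, IsOpen (H : Set G) ∧ (H : Set G) ⊆ U

/-- Words of length at most `n` in the free group. -/
def Bword (X : Type*) [DecidableEq X] (n : ℕ) : Set (FreeGroup X) :=
  {w : FreeGroup X | w.toWord.length ≤ n}

/-- The given group topology on `FreeGroup X` makes it the uniform free topological group
over the uniform space `X`: the canonical map is uniformly continuous (for the two-sided
uniformity) and every uniformly continuous map to a topological group extends to a
continuous homomorphism. -/
def IsUniformFreeTopGroup (X : Type u) [UniformSpace X] [TopologicalSpace (FreeGroup X)]
    [IsTopologicalGroup (FreeGroup X)] : Prop :=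
  Filter.Tendsto (Prod.map (FreeGroup.of : X → FreeGroup X) FreeGroup.of) (uniformity X)
      (twoSidedUnif (FreeGroup X)) ∧
    ∀ (G : Type u) [Group G] [TopologicalSpace G] [IsTopologicalGroup G] (φ : X → G),
      Filter.Tendsto (Prod.map φ φ) (uniformity X) (twoSidedUnif G) →
        Continuous ⇑(FreeGroup.lift φ)

/-- The given group topology on `FreeGroup X` makes it the free non-archimedean balanced
topological group over the uniform space `X`. -/
def IsFreeNABalancedGroup (X : Type u) [UniformSpace X] [TopologicalSpace (FreeGroup X)]
    [IsTopologicalGroup (FreeGroup X)] : Prop :=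
  IsNonArchGroup (FreeGroup X) ∧ leftUnif (FreeGroup X) = rightUnif (FreeGroup X) ∧
    Filter.Tendsto (Prod.map (FreeGroup.of : X → FreeGroup X) FreeGroup.of) (uniformity X)
      (twoSidedUnif (FreeGroup X)) ∧
    ∀ (G : Type u) [Group G] [TopologicalSpace G] [IsTopologicalGroup G] (φ : X → G),
      IsNonArchGroup G → leftUnif G = rightUnif G →
      Filter.Tendsto (Prod.map φ φ) (uniformity X) (twoSidedUnif G) →
        Continuous ⇑(FreeGroup.lift φ)

/-!
A P-group is non-archimedean: the intersection of neighbourhoods `Vₙ` of `1` with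
`Vₙ₊₁⁻¹ = Vₙ₊₁` and `Vₙ₊₁ * Vₙ₊₁ ⊆ Vₙ` is an open subgroup. Given an open subgroup `H`,
`𝔠`-boundedness lets `G ⧸ H` inject into `ℝ`; composed with `arctan` this is a bounded function
constant on left cosets, hence left-uniformly continuous. If it is also right-uniformly continuous,
the entourages witnessing this for `ε = 1/(n+1)` intersect to a right entourage (P-space again) on
which the function is constant, i.e. one inside the left coset relation of `H`. So every left
entourage is a right one, and inversion swaps the two uniformities.
-/
open scoped Cardinal Real

namespace IsPSpace

variable {X : Type*} [TopologicalSpace X]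

theorem isOpen_of_isGδ (hP : IsPSpace X) {s : Set X} (hs : IsGδ s) : IsOpen s := by
  obtain ⟨f, hf, rfl⟩ := hs.eq_iInter_nat
  exact hP f hf

theorem countableInterFilter_nhds (hP : IsPSpace X) (x : X) : CountableInterFilter (𝓝 x) := by
  refine ⟨fun S hSc hS => ?_⟩
  choose! t hts hto hxt using fun s hs => mem_nhds_iff.mp (hS s hs)
  have hopen : IsOpen (⋂ s ∈ S, t s) := hP.isOpen_of_isGδ (.biInter_of_isOpen hSc hto)
  refine mem_of_superset (hopen.mem_nhds (mem_iInter₂.mpr hxt)) ?_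
  exact subset_sInter fun s hs => (biInter_subset_of_mem hs).trans (hts s hs)

end IsPSpace

section TopologicalGroup

variable {G : Type*} [Group G] [TopologicalSpace G] [IsTopologicalGroup G]

theorem IsPSpace.isNonArchGroup (hP : IsPSpace G) : IsNonArchGroup G := by
  have := hP.countableInterFilter_nhds (1 : G)
  intro U hU
  choose! half hhalf_nhds _ hhalf_inv hhalf_mul using
    fun V (hV : V ∈ 𝓝 (1 : G)) => exists_closed_nhds_one_inv_eq_mul_subset hV
  have hhalf_sub : ∀ V ∈ 𝓝 (1 : G), half V ⊆ V := fun V hV a ha =>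
    mul_one a ▸ hhalf_mul V hV (mul_mem_mul ha (mem_of_mem_nhds (hhalf_nhds V hV)))
  set V : ℕ → Set G := fun n => half^[n] U
  have hV : ∀ n, V n ∈ 𝓝 1 := fun n => by
    induction n with
    | zero => exact hU
    | succ n ih => simpa only [V, Function.iterate_succ_apply'] using hhalf_nhds _ ih
  have hV_succ : ∀ n, V (n + 1) = half (V n) := fun n => Function.iterate_succ_apply' half n U
  let H : Subgroup G :=
    { carrier := ⋂ n, V n
      one_mem' := mem_iInter.mpr fun n => mem_of_mem_nhds (hV n)
      mul_mem' := fun {a b} ha hb => mem_iInter.mpr fun n => by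
        have hVn := hhalf_mul _ (hV n)
        rw [← hV_succ] at hVn
        exact hVn (mul_mem_mul (mem_iInter.mp ha _) (mem_iInter.mp hb _))
      inv_mem' := fun {a} ha => mem_iInter.mpr fun n => by
        refine hhalf_sub _ (hV n) ?_
        rw [← hhalf_inv _ (hV n), ← hV_succ]
        exact inv_mem_inv.mpr (mem_iInter.mp ha _) }
  have hH : (H : Set G) ∈ 𝓝 1 := countable_iInter_mem.mpr hV
  exact ⟨H, H.isOpen_of_mem_nhds hH, iInter_subset V 0⟩

end TopologicalGroup

theorem UCOn.exists_mem_forall_eq {α : Type*} {μ : Filter (α × α)} [CountableInterFilter μ]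
    {B : Set α} {f : B → ℝ} (hf : UCOn μ B f) :
    ∃ δ ∈ μ, ∀ x y : B, ((x : α), (y : α)) ∈ δ → f x = f y := by
  choose δ hδ hfδ using fun n : ℕ => hf (1 / (n + 1)) Nat.one_div_pos_of_nat
  refine ⟨⋂ n, δ n, countable_iInter_mem.mpr hδ, fun x y hxy => ?_⟩
  by_contra hne
  obtain ⟨n, hn⟩ := exists_nat_one_div_lt (abs_pos.mpr (sub_ne_zero.mpr hne))
  exact lt_asymm hn (hfδ n x y (mem_iInter.mp hxy n))

theorem QuotientGroup.mk_le_of_mul_eq_univ {G : Type*} [Group G] {H : Subgroup G} {F : Set G}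
    (hF : F * (H : Set G) = univ) : #(G ⧸ H) ≤ #F := by
  refine Cardinal.mk_le_of_surjective (f := fun g : F => ((g : G) : G ⧸ H)) ?_
  rintro ⟨x⟩
  obtain ⟨g, hg, h, hh, rfl⟩ : x ∈ F * (H : Set G) := hF ▸ mem_univ x
  exact ⟨⟨g, hg⟩, QuotientGroup.eq.mpr (by simpa using hh)⟩

section Uniformities

variable {G : Type*} [Group G] [TopologicalSpace G]

theorem comap_inv_rightUnif : comap (Prod.map Inv.inv Inv.inv) (rightUnif G) = leftUnif G := by
  simp only [rightUnif, leftUnif, comap_comap, Function.comp_def, Prod.map_fst, Prod.map_snd,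
    inv_inv]

theorem comap_inv_leftUnif : comap (Prod.map Inv.inv Inv.inv) (leftUnif G) = rightUnif G := by
  simp only [rightUnif, leftUnif, comap_comap, Function.comp_def, Prod.map_fst, Prod.map_snd,
    inv_inv]

theorem leftUnif_eq_rightUnif_of_le (h : rightUnif G ≤ leftUnif G) : leftUnif G = rightUnif G := by
  refine le_antisymm ?_ h
  calc leftUnif G = comap (Prod.map Inv.inv Inv.inv) (rightUnif G) := comap_inv_rightUnif.symm
    _ ≤ comap (Prod.map Inv.inv Inv.inv) (leftUnif G) := comap_mono h
    _ = rightUnif G := comap_inv_leftUnif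

theorem IsPSpace.countableInterFilter_rightUnif (hP : IsPSpace G) :
    CountableInterFilter (rightUnif G) := by
  have := hP.countableInterFilter_nhds 1
  unfold rightUnif
  infer_instance

theorem setOf_mk_eq_mem_leftUnif {H : Subgroup G} (hH : IsOpen (H : Set G)) :
    {p : G × G | (p.1 : G ⧸ H) = p.2} ∈ leftUnif G :=
  mem_comap.mpr ⟨H, hH.mem_nhds H.one_mem, fun _ hp => QuotientGroup.eq.mpr hp⟩

theorem FunBalancedOn.setOf_mk_eq_mem_rightUnif (hFB : FunBalancedOn G univ) (hP : IsPSpace G)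
    {H : Subgroup G} (hH : IsOpen (H : Set G)) (hcard : #(G ⧸ H) ≤ 𝔠) :
    {p : G × G | (p.1 : G ⧸ H) = p.2} ∈ rightUnif G := by
  obtain ⟨ψ⟩ : Nonempty (G ⧸ H ↪ ℝ) := by
    rwa [← Cardinal.lift_mk_le', Cardinal.mk_real, Cardinal.lift_continuum, Cardinal.lift_uzero]
  let f : ↥(univ : Set G) → ℝ := fun x => Real.arctan (ψ (x : G))
  have hbdd : ∃ M, ∀ x, |f x| ≤ M := ⟨π / 2, fun x =>
    (abs_lt.mpr ⟨Real.neg_pi_div_two_lt_arctan _, Real.arctan_lt_pi_div_two _⟩).le⟩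
  have hleft : UCOn (leftUnif G) univ f := fun e he =>
    ⟨_, setOf_mk_eq_mem_leftUnif hH, fun x y (hxy : ((x : G) : G ⧸ H) = y) => by
      simpa only [f, hxy, sub_self, abs_zero] using he⟩
  have := hP.countableInterFilter_rightUnif
  obtain ⟨δ, hδ, hfδ⟩ := (hFB f hbdd hleft).exists_mem_forall_eq
  exact mem_of_superset hδ fun p hp =>
    ψ.injective (Real.arctan_injective (hfδ ⟨p.1, trivial⟩ ⟨p.2, trivial⟩ hp))

end Uniformities

/-- a 𝔠-bounded P-group is balanced iff it is functionally balanced. -/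
theorem cBounded_pGroup_balanced_iff_funBalanced (G : Type*) [Group G] [TopologicalSpace G]
    [IsTopologicalGroup G] (hP : IsPSpace G)
    (hbdd : ∀ U ∈ nhds (1 : G), ∃ F : Set G,
      Cardinal.mk ↥F ≤ Cardinal.continuum ∧ F * U = Set.univ) :
    leftUnif G = rightUnif G ↔ FunBalancedOn G Set.univ := by
  refine ⟨fun h _ _ hf => h ▸ hf, fun hFB => leftUnif_eq_rightUnif_of_le fun s hs => ?_⟩
  obtain ⟨U, hU, hUs⟩ := mem_comap.mp hs
  obtain ⟨H, hHo, hHU⟩ := hP.isNonArchGroup U hU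
  obtain ⟨F, hFc, hFH⟩ := hbdd H (hHo.mem_nhds H.one_mem)
  have hcosets := hFB.setOf_mk_eq_mem_rightUnif hP hHo
    ((QuotientGroup.mk_le_of_mul_eq_univ hFH).trans hFc)
  exact mem_of_superset hcosets fun p hp => hUs (hHU (QuotientGroup.eq.mp hp))
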